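/- arXiv:1908.09768 — 4 statements merged into one kernel-verified Lean document; each statement's English description precedes it below -/
import Mathlib

section
/- Let V and W be vector spaces over a field, let δ₁, δ_P : V → W and T : V → V, U : W → W be linear maps, and let c be a nonzero scalar. Assume: (a) the map δ : V × V → W, (φ,ψ) ↦ δ₁φ + δ_Pψ is injective; (b) U ∘ δ₁ = δ₁ ∘ T - c·δ_P; (c) U ∘ δ_P = 0. Then for φ ∈ V, one has Tφ = 0 if and only if U²(δ₁φ) = 0. -/
/-- Abstract version of Proposition `KerTPn`: kernel of the Hecke operator T
via the square of the Atkin operator U. -/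
theorem stmt_0 {K V W : Type*} [Field K] [AddCommGroup V] [Module K V]
    [AddCommGroup W] [Module K W]
    (δ₁ δP : V →ₗ[K] W) (T : V →ₗ[K] V) (U : W →ₗ[K] W) (c : K) (hc : c ≠ 0)
    (hinj : Function.Injective (fun p : V × V => δ₁ p.1 + δP p.2))
    (hUδ₁ : U.comp δ₁ = δ₁.comp T - c • δP)
    (hUδP : U.comp δP = 0) :
    ∀ φ : V, T φ = 0 ↔ U (U (δ₁ φ)) = 0 := by
  intro φ
  have h1 : ∀ ψ : V, U (δ₁ ψ) = δ₁ (T ψ) - c • δP ψ := fun ψ =>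
    congrFun (congrArg DFunLike.coe hUδ₁) ψ
  have h2 : ∀ ψ : V, U (δP ψ) = 0 := fun ψ =>
    congrFun (congrArg DFunLike.coe hUδP) ψ
  have key : U (U (δ₁ φ)) = δ₁ (T (T φ)) + δP (-c • T φ) := by
    rw [h1 φ, map_sub, map_smul, h2, smul_zero, sub_zero, h1 (T φ)]
    simp [sub_eq_add_neg]
  constructor
  · intro h
    rw [key, h, map_zero, smul_zero, map_zero, map_zero, add_zero]
  · intro h
    rw [key] at h
    have := hinj (a₁ := (T (T φ), -c • T φ)) (a₂ := (0, 0)) (by simpa using h)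
    have h3 : -c • T φ = 0 := congrArg Prod.snd this
    have : c • T φ = 0 := by
      have := congrArg Neg.neg h3
      simpa using this
    exact (smul_eq_zero.mp this).resolve_left hc
end

section
/- Let V, W be vector spaces over a field, δ₁, δ_P : V → W and T : V → V, U : W → W linear maps, c a nonzero scalar, satisfying: δ(φ,ψ) := δ₁φ + δ_Pψ is injective, U∘δ₁ = δ₁∘T - c·δ_P, and U∘δ_P = 0. Let W_old denote the image of δ. Then the set of eigenvalues of U restricted to W_old equals the set of eigenvalues of T together with 0. More precisely: (i) if δ(φ,ψ) ∈ W_old is a nonzero eigenvector of U with eigenvalue λ, then Tφ = λφ; (ii) if Tφ = λφ with λ ≠ 0 and φ ≠ 0, then δ₁φ - (c/λ)δ_Pφ is a nonzero eigenvector of U with eigenvalue λ; (iii) δ_Pφ is in the kernel of U for every φ. -/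
/-- Abstract version of Proposition `PropEigenvalues`: eigenvalues of the Atkin
operator U on oldforms are the eigenvalues of T together with 0. -/
theorem stmt_1 {K V W : Type*} [Field K] [AddCommGroup V] [Module K V]
    [AddCommGroup W] [Module K W]
    (δ₁ δP : V →ₗ[K] W) (T : V →ₗ[K] V) (U : W →ₗ[K] W) (c : K) (hc : c ≠ 0)
    (hinj : Function.Injective (fun p : V × V => δ₁ p.1 + δP p.2))
    (hUδ₁ : U.comp δ₁ = δ₁.comp T - c • δP)
    (hUδP : U.comp δP = 0) :
    (∀ (φ ψ : V) (lam : K), δ₁ φ + δP ψ ≠ 0 →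
        U (δ₁ φ + δP ψ) = lam • (δ₁ φ + δP ψ) → T φ = lam • φ) ∧
    (∀ (φ : V) (lam : K), lam ≠ 0 → φ ≠ 0 → T φ = lam • φ →
        δ₁ φ - (c / lam) • δP φ ≠ 0 ∧
        U (δ₁ φ - (c / lam) • δP φ) = lam • (δ₁ φ - (c / lam) • δP φ)) ∧
    (∀ φ : V, U (δP φ) = 0) := by
  have hU1 : ∀ v, U (δ₁ v) = δ₁ (T v) - c • δP v := fun v =>
    congrFun (congrArg DFunLike.coe hUδ₁) v
  have hUP : ∀ v, U (δP v) = 0 := fun v =>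
    congrFun (congrArg DFunLike.coe hUδP) v
  refine ⟨?_, ?_, hUP⟩
  · intro φ ψ lam _ heig
    have h : (fun p : V × V => δ₁ p.1 + δP p.2) (T φ, (-c) • φ)
        = (fun p : V × V => δ₁ p.1 + δP p.2) (lam • φ, lam • ψ) := by
      rw [map_add, hU1, hUP] at heig
      simp only [map_neg, map_smul, neg_smul, smul_add, sub_eq_add_neg, add_zero] at heig ⊢
      rw [heig]
    have h2 := hinj h
    have : (T φ, (-c) • φ).1 = (lam • φ, lam • ψ).1 := by rw [h2]
    exact this
  · intro φ lam hlam hφ hT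
    constructor
    · intro h0
      have h : (fun p : V × V => δ₁ p.1 + δP p.2) (φ, (-(c/lam)) • φ)
          = (fun p : V × V => δ₁ p.1 + δP p.2) ((0:V), (0:V)) := by
        simp only [map_neg, map_smul, neg_smul, map_zero, add_zero]
        rw [← sub_eq_add_neg, h0]
      have h2 := hinj h
      have : (φ, (-(c/lam)) • φ).1 = ((0:V), (0:V)).1 := by rw [h2]
      exact hφ this
    · have hmul : lam * (c / lam) = c := by field_simp
      rw [map_sub, hU1, map_smul, hUP, hT, smul_zero, sub_zero, smul_sub,
        map_smul, smul_smul, hmul]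
end

section
/- Let V, W be vector spaces over a field, and let δ₁, δ_P : V → W, U : W → W, Fr : W → W be linear maps, with a nonzero scalar a satisfying: (i) ker U ⊇ im δ_P; (ii) Fr∘δ₁ = δ_P; (iii) for every φ ∈ W with Uφ = 0, one has Fr(φ) ∈ im δ₁ (i.e. Fr φ = δ₁ψ₀ for some ψ₀ ∈ V); (iv) Fr∘Fr = a·id. Then ker U = im δ_P. -/
/-- Abstract version of Proposition `PropKerUt`: ker U = im δ_P. -/
theorem stmt_4 {K V W : Type*} [Field K] [AddCommGroup V] [Module K V]
    [AddCommGroup W] [Module K W]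
    (δ₁ δP : V →ₗ[K] W) (U Fr : W →ₗ[K] W) (a b : K) (ha : a ≠ 0) (hb : b ≠ 0)
    (h1 : LinearMap.range δP ≤ LinearMap.ker U)
    (h2 : Fr.comp δ₁ = δP)
    (h3 : ∀ φ : W, U φ = 0 → ∃ ψ₀ : V, Fr φ = δ₁ ψ₀)
    (h4 : Fr.comp Fr = a • LinearMap.id) :
    LinearMap.ker U = LinearMap.range δP := by
  refine le_antisymm ?_ h1
  intro φ hφ
  obtain ⟨ψ₀, hψ⟩ := h3 φ (LinearMap.mem_ker.mp hφ)
  refine ⟨a⁻¹ • ψ₀, ?_⟩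
  have hP : δP ψ₀ = Fr (Fr φ) := by rw [← h2, LinearMap.comp_apply, hψ]
  have hFF : Fr (Fr φ) = a • φ := by
    have := congrArg (fun f => f φ) h4
    simpa using this
  rw [map_smul, hP, hFF, smul_smul, inv_mul_cancel₀ ha, one_smul]
end

section
/- Let V, W be vector spaces, δ₁, δ_P : V → W, T : V → V, U : W → W linear, c ≠ 0 a scalar, with U∘δ₁ = δ₁∘T - c·δ_P and U∘δ_P = 0. If Tφ = λφ with λ ≠ 0, then ψ₁ := δ₁φ - (c/λ)δ_Pφ satisfies Uψ₁ = λψ₁. -/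
/-- Part of the proof of Proposition `PropEigenvalues`: a T-eigenform φ with
nonzero eigenvalue λ lifts to the U-eigen-oldform δ₁φ - (c/λ)δ_Pφ. -/
theorem stmt_12 {K V W : Type*} [Field K] [AddCommGroup V] [Module K V]
    [AddCommGroup W] [Module K W]
    (δ₁ δP : V →ₗ[K] W) (T : V →ₗ[K] V) (U : W →ₗ[K] W) (c : K) (hc : c ≠ 0)
    (hUδ₁ : U.comp δ₁ = δ₁.comp T - c • δP)
    (hUδP : U.comp δP = 0)
    (φ : V) (lam : K) (hlam : lam ≠ 0) (heig : T φ = lam • φ) :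
    U (δ₁ φ - (c / lam) • δP φ) = lam • (δ₁ φ - (c / lam) • δP φ) := by
  have h1 : U (δ₁ φ) = δ₁ (T φ) - c • δP φ := by
    have := congrFun (congrArg DFunLike.coe hUδ₁) φ
    simpa using this
  have h2 : U (δP φ) = 0 := by
    have := congrFun (congrArg DFunLike.coe hUδP) φ
    simpa using this
  rw [map_sub, map_smul, h1, h2, heig, map_smul, smul_zero, sub_zero,
    smul_sub, smul_smul, mul_div_cancel₀ c hlam]
end
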